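/- arXiv:1405.7267 — 5 statements merged into one kernel-verified Lean document; each statement's English description precedes it below -/
import Mathlib

section
/- Let (s_n)_{n≥0} be a sequence of real numbers and let n₀ ≥ 0 be an integer. Assume that the Hankel determinants satisfy D_n > 0 for all n < n₀ and D_n = 0 for all n ≥ n₀. Then for every n ≥ 0 the Hankel matrix H_n = (s_{i+j})_{0≤i,j≤n} is positive semi-definite. -/
/-!
Let `L` be the linear functional on `ℝ[X]` with `L (X ^ k) = s k`; then `H_n` is the Gram
matrix of `(p, q) ↦ L (p * q)` on polynomials of degree `≤ n`. By Sylvester's criterion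
`H_{n₀-1}` is positive definite. A kernel vector of `H_{n₀}` gives a monic `q` of degree `n₀`
with `L (X ^ k * q) = 0` for `k ≤ n₀`, and `D_K = 0` propagates this to every `k`: at a first
`K` with `L (X ^ K * q) ≠ 0`, the matrix `H_K` would be nonsingular. So `L` vanishes on the
ideal `(q)`, and `L (p * p) = L ((p %ₘ q) * (p %ₘ q)) ≥ 0` because `p %ₘ q` has degree `< n₀`.
-/

open Matrix Polynomial

namespace Matrix

theorem posDef_of_det_submatrix_castLE_pos :
    ∀ {n : ℕ} {A : Matrix (Fin n) (Fin n) ℝ}, A.IsHermitian →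
      (∀ m (hm : m < n), 0 < (A.submatrix (Fin.castLE hm) (Fin.castLE hm)).det) → A.PosDef
  | 0, _, hA, _ =>
    posDef_iff_dotProduct_mulVec.2 ⟨hA, fun _ hx => (hx (Subsingleton.elim _ _)).elim⟩
  | n + 1, A, hA, h => by
    have hdetA : 0 < A.det := by simpa using h n n.lt_succ_self
    set M := A.submatrix finSumFinEquiv finSumFinEquiv
    have hM : M.IsHermitian := hA.submatrix _
    have hA' : M.toBlocks₁₁.PosDef := by
      refine posDef_of_det_submatrix_castLE_pos (hM.submatrix _) fun m hm => ?_
      convert h m (hm.trans n.lt_succ_self) using 2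
      ext i j
      rfl
    have : Invertible M.toBlocks₁₁ := hA'.isUnit.invertible
    have hblocks :
        M = fromBlocks M.toBlocks₁₁ M.toBlocks₁₂ M.toBlocks₁₂ᴴ M.toBlocks₂₂ := by
      conv_lhs => rw [← fromBlocks_toBlocks M]
      rw [← fromBlocks_toBlocks M, isHermitian_fromBlocks_iff] at hM
      rw [hM.2.1]
    -- The Schur complement of the leading block is `1 × 1`, with determinant `det A / det A' > 0`.
    set S := M.toBlocks₂₂ - M.toBlocks₁₂ᴴ * M.toBlocks₁₁⁻¹ * M.toBlocks₁₂
    have hS : 0 < S.det := by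
      have hdetM : 0 < M.det := (det_submatrix_equiv_self finSumFinEquiv A).symm ▸ hdetA
      rw [hblocks, det_fromBlocks₁₁, invOf_eq_nonsing_inv] at hdetM
      exact pos_of_mul_pos_right hdetM hA'.det_pos.le
    have hMpsd : M.PosSemidef := by
      rw [hblocks, PosDef.fromBlocks₁₁ _ _ hA']
      change S.PosSemidef
      have hSdiag : S = diagonal fun _ => S.det := by
        ext i j
        fin_cases i; fin_cases j
        simp
      rw [hSdiag, posSemidef_diagonal_iff]
      exact fun _ => hS.le
    exact ((posSemidef_submatrix_equiv _).1 hMpsd).posDef_iff_det_ne_zero.2 hdetA.ne'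

variable {R : Type*}

/-- Indexed by size: the matrix `H_n = (s (i + j))_{0 ≤ i, j ≤ n}` is `hankel s (n + 1)`. -/
def hankel (s : ℕ → R) (n : ℕ) : Matrix (Fin n) (Fin n) R := of fun i j => s (i + j)

lemma isHermitian_hankel [CommRing R] [StarRing R] [TrivialStar R] (s : ℕ → R) (n : ℕ) :
    (hankel s n).IsHermitian := by
  ext i j
  simp [hankel, add_comm]

end Matrix

namespace Polynomial

variable {R : Type*} [CommRing R] (s : ℕ → R)

lemma modByMonic_mem_degreeLT [Nontrivial R] {q : R[X]} (hq : q.Monic) (p : R[X]) :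
    p %ₘ q ∈ degreeLT R q.natDegree :=
  mem_degreeLT.2 ((degree_modByMonic_lt p hq).trans_eq (degree_eq_natDegree hq.ne_zero))

noncomputable def momentFunctional : R[X] →ₗ[R] R :=
  lsum fun n => LinearMap.id.smulRight (s n)

@[simp]
lemma momentFunctional_monomial (n : ℕ) (a : R) :
    momentFunctional s (monomial n a) = a * s n := by
  simp [momentFunctional]

lemma momentFunctional_X_pow_mul_mul {q : R[X]} {i : ℕ} (a : R[X])
    (hq : ∀ k < i + a.natDegree, momentFunctional s (X ^ k * q) = 0) :
    momentFunctional s (X ^ i * (a * q)) =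
      a.leadingCoeff * momentFunctional s (X ^ (i + a.natDegree) * q) := by
  have hmonomial (j : ℕ) (c : R) : momentFunctional s (X ^ i * (monomial j c * q)) =
      c * momentFunctional s (X ^ (i + j) * q) := by
    rw [show X ^ i * (monomial j c * q) = c • (X ^ (i + j) * q) by
      rw [← C_mul_X_pow_eq_monomial, ← C_mul']; ring, map_smul, smul_eq_mul]
  conv_lhs => rw [a.as_sum_range' (a.natDegree + 1) (Nat.lt_succ_self _)]
  rw [Finset.sum_mul, Finset.mul_sum, map_sum, Finset.sum_range_succ, Finset.sum_eq_zero,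
    zero_add, hmonomial, leadingCoeff]
  intro j hj
  rw [hmonomial, hq _ (by simpa using hj), mul_zero]

lemma momentFunctional_mul_eq_zero {q : R[X]} (hq : ∀ k, momentFunctional s (X ^ k * q) = 0)
    (p : R[X]) : momentFunctional s (p * q) = 0 := by
  induction p using Polynomial.induction_on' with
  | add p r hp hr => rw [add_mul, map_add, hp, hr, add_zero]
  | monomial k c => rw [← C_mul_X_pow_eq_monomial, mul_assoc, C_mul', map_smul, hq, smul_zero]

end Polynomial

namespace Matrix

variable {R : Type*} [CommRing R] (s : ℕ → R)

lemma hankel_mulVec_apply {n : ℕ} (x : Fin n → R) (i : Fin n) :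
    (hankel s n *ᵥ x) i =
      momentFunctional s (X ^ (i : ℕ) * ((degreeLTEquiv R n).symm x : R[X])) := by
  simp [degreeLTEquiv, mulVec, dotProduct, hankel, Finset.mul_sum, X_pow_mul_monomial, mul_comm,
    add_comm]

lemma dotProduct_hankel_mulVec {n : ℕ} (x : Fin n → R) :
    x ⬝ᵥ (hankel s n *ᵥ x) = momentFunctional s
      (((degreeLTEquiv R n).symm x : R[X]) * ((degreeLTEquiv R n).symm x : R[X])) := by
  simp only [dotProduct, hankel_mulVec_apply]
  conv_rhs => enter [2, 1]; simp only [degreeLTEquiv, LinearEquiv.coe_symm_mk']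
  simp [Finset.sum_mul, ← C_mul_X_pow_eq_monomial, C_mul']

lemma det_hankel_eq_zero_iff [IsDomain R] {n : ℕ} : (hankel s n).det = 0 ↔
    ∃ p ∈ degreeLT R n, p ≠ 0 ∧ ∀ i < n, momentFunctional s (X ^ i * p) = 0 := by
  rw [← exists_mulVec_eq_zero_iff]
  constructor
  · rintro ⟨x, hx, hHx⟩
    refine ⟨(degreeLTEquiv R n).symm x, Submodule.coe_mem _, by simpa using hx, fun i hi => ?_⟩
    rw [← hankel_mulVec_apply s x ⟨i, hi⟩, hHx, Pi.zero_apply]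
  · rintro ⟨p, hp, hp0, hpL⟩
    refine ⟨degreeLTEquiv R n ⟨p, hp⟩, by simpa using hp0, funext fun i => ?_⟩
    rw [hankel_mulVec_apply, LinearEquiv.symm_apply_apply]
    exact hpL i i.2

lemma posSemidef_hankel_iff [PartialOrder R] [StarRing R] [TrivialStar R] {n : ℕ} :
    (hankel s n).PosSemidef ↔ ∀ p ∈ degreeLT R n, 0 ≤ momentFunctional s (p * p) := by
  simp only [posSemidef_iff_dotProduct_mulVec, isHermitian_hankel, true_and, star_trivial,
    dotProduct_hankel_mulVec]
  refine ⟨fun h p hp => ?_, fun h x => h _ (Submodule.coe_mem _)⟩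
  simpa using h (degreeLTEquiv R n ⟨p, hp⟩)

lemma posSemidef_hankel_of_momentFunctional_mul_eq_zero [PartialOrder R] [StarRing R]
    [TrivialStar R] [Nontrivial R] {q : R[X]} (hq : q.Monic)
    (hG : (hankel s q.natDegree).PosSemidef) (hL : ∀ p, momentFunctional s (p * q) = 0)
    (n : ℕ) : (hankel s n).PosSemidef := by
  refine (posSemidef_hankel_iff s).2 fun p _ => ?_
  have hsq : p * p = p %ₘ q * (p %ₘ q) + (p /ₘ q * (p + p %ₘ q)) * q := by
    linear_combination (-(p + p %ₘ q)) * modByMonic_add_div p q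
  rw [hsq, map_add, hL, add_zero]
  exact (posSemidef_hankel_iff s).1 hG _ (modByMonic_mem_degreeLT hq p)

/-- Write a kernel polynomial `p` of `hankel s (K + 1)` as `a * q + r`: nondegeneracy of
`hankel s q.natDegree` forces `r = 0`, and then pairing `p` with `X ^ (K - deg a)` leaves only
`a.leadingCoeff * L (X ^ K * q)`. -/
lemma momentFunctional_X_pow_mul_eq_zero_of_det_hankel_eq_zero [IsDomain R] {q : R[X]}
    (hq : q.Monic) {K : ℕ} (hK : q.natDegree ≤ K) (hG : (hankel s q.natDegree).det ≠ 0)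
    (hH : (hankel s (K + 1)).det = 0) (hlow : ∀ k < K, momentFunctional s (X ^ k * q) = 0) :
    momentFunctional s (X ^ K * q) = 0 := by
  obtain ⟨p, hp, hp0, hpL⟩ := (det_hankel_eq_zero_iff s).1 hH
  have hpdeg : p.natDegree ≤ K := by
    rw [mem_degreeLT, ← natDegree_lt_iff_degree_lt hp0] at hp
    omega
  set a := p /ₘ q
  have ha : a.natDegree ≤ K - q.natDegree := by
    rw [natDegree_divByMonic _ hq]
    omega
  have hdiv : p %ₘ q + a * q = p := by rw [mul_comm]; exact modByMonic_add_div p q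
  have hL (i : ℕ) (hi : i + a.natDegree ≤ K) : momentFunctional s (X ^ i * (a * q)) =
      a.leadingCoeff * momentFunctional s (X ^ (i + a.natDegree) * q) :=
    momentFunctional_X_pow_mul_mul s a fun k hk => hlow k (by omega)
  have hr : p %ₘ q = 0 := by
    by_contra hr0
    refine hG ((det_hankel_eq_zero_iff s).2
      ⟨p %ₘ q, modByMonic_mem_degreeLT hq p, hr0, fun i hi => ?_⟩)
    have hpi := hpL i (by omega)
    rwa [← hdiv, mul_add, map_add, hL i (by omega), hlow _ (by omega), mul_zero, add_zero] at hpi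
  have ha0 : a ≠ 0 := by
    rintro h
    rw [h, hr, zero_mul, add_zero] at hdiv
    exact hp0 hdiv.symm
  have hpK := hpL (K - a.natDegree) (by omega)
  rw [← hdiv, hr, zero_add, hL _ (by omega), Nat.sub_add_cancel (by omega)] at hpK
  exact (mul_eq_zero.1 hpK).resolve_left (leadingCoeff_ne_zero.2 ha0)

variable {K : Type*} [Field K] (s : ℕ → K)

lemma exists_monic_momentFunctional_X_pow_mul_eq_zero {n : ℕ} (hG : (hankel s n).det ≠ 0)
    (hH : (hankel s (n + 1)).det = 0) :
    ∃ q : K[X], q.Monic ∧ q.natDegree = n ∧ ∀ i ≤ n, momentFunctional s (X ^ i * q) = 0 := by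
  obtain ⟨p, hp, hp0, hpL⟩ := (det_hankel_eq_zero_iff s).1 hH
  rw [mem_degreeLT, ← natDegree_lt_iff_degree_lt hp0] at hp
  have hdeg : p.natDegree = n := by
    refine le_antisymm (by omega) (not_lt.1 fun hlt => hG ((det_hankel_eq_zero_iff s).2
      ⟨p, mem_degreeLT.2 ((natDegree_lt_iff_degree_lt hp0).1 hlt), hp0,
        fun i hi => hpL i (by omega)⟩))
  refine ⟨p * C p.leadingCoeff⁻¹, monic_mul_leadingCoeff_inv hp0, ?_, fun i hi => ?_⟩
  · rw [natDegree_mul_C (inv_ne_zero (leadingCoeff_ne_zero.2 hp0)), hdeg]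
  · rw [← mul_assoc, mul_comm, C_mul', map_smul, hpL i (by omega), smul_zero]

lemma exists_monic_momentFunctional_mul_eq_zero {n : ℕ} (hG : (hankel s n).det ≠ 0)
    (hH : ∀ m ≥ n, (hankel s (m + 1)).det = 0) :
    ∃ q : K[X], q.Monic ∧ q.natDegree = n ∧ ∀ p, momentFunctional s (p * q) = 0 := by
  obtain ⟨q, hq, rfl, hqL⟩ := exists_monic_momentFunctional_X_pow_mul_eq_zero s hG (hH _ le_rfl)
  refine ⟨q, hq, rfl, momentFunctional_mul_eq_zero s fun k => ?_⟩
  induction k using Nat.strong_induction_on with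
  | _ k ih =>
    rcases le_or_gt k q.natDegree with hk | hk
    · exact hqL k hk
    · exact momentFunctional_X_pow_mul_eq_zero_of_det_hankel_eq_zero s hq hk.le hG (hH k hk.le) ih

end Matrix

/-- If the Hankel determinants of a real sequence satisfy `D n > 0` for `n < n₀`
and `D n = 0` for `n ≥ n₀`, then every Hankel matrix is positive semi-definite. -/
theorem hankel_posSemidef_of_det_sign_pattern (s : ℕ → ℝ) (n₀ : ℕ)
    (hpos : ∀ n < n₀, 0 < (Matrix.of fun i j : Fin (n + 1) => s (i.1 + j.1)).det)
    (hzero : ∀ n ≥ n₀, (Matrix.of fun i j : Fin (n + 1) => s (i.1 + j.1)).det = 0) :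
    ∀ n : ℕ, (Matrix.of fun i j : Fin (n + 1) => s (i.1 + j.1)).PosSemidef := by
  have hG : (hankel s n₀).PosDef :=
    posDef_of_det_submatrix_castLE_pos (isHermitian_hankel s n₀) hpos
  obtain ⟨q, hq, rfl, hqL⟩ := exists_monic_momentFunctional_mul_eq_zero s hG.det_pos.ne' hzero
  exact fun n =>
    posSemidef_hankel_of_momentFunctional_mul_eq_zero s hq hG.posSemidef hqL (n + 1)
end

section
/- Let n ≥ 1, let x'_1 < … < x'_n be real numbers, let m_1, …, m_n > 0, and define s_k = Σ_{j=1}^{n} m_j (x'_j)^k for k ≥ 0. Let p ≥ 1 and let A = (a_{i,j})_{0≤i,j≤n+p} be a real (n+p+1)×(n+p+1) matrix satisfying a_{i,j} = s_{i+j} whenever i + j ≤ 2n + p − 1, and write x_j = a_{n+j, n+p−j} for j = 0, 1, …, p (the entries a_{i,j} with i + j ≥ 2n + p + 1 are arbitrary). Then det A = (−1)^{p(p+1)/2} · D_{n−1} · Π_{j=0}^{p} (x_j − s_{2n+p}), where D_{n−1} = det (s_{i+j})_{0≤i,j≤n−1}. In particular det A is independent of the entries a_{i,j} with i + j ≥ 2n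 + p + 1. -/
/-!
If `c₀, …, c_{n-1}, c_n = 1` are the coefficients of `∏ⱼ (X - x'ⱼ)`, the moments satisfy the
linear recurrence `∑ₜ cₜ s_{q+t} = 0`. Replacing every row `i ≥ n` of `A` by
`∑ₜ cₜ · (row i - n + t)` is a unitriangular row operation; it kills every entry with
`i + j < 2n + p` and turns the antidiagonal entries `xⱼ` (where `i + j = 2n + p`) into
`xⱼ - s_{2n+p}`. The new matrix is block upper triangular, with the Hankel block of `D_{n-1}`
and a `(p+1) × (p+1)` anti-triangular block whose determinant is a signed antidiagonal product.
-/

open Finset Matrix Polynomial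

variable {R : Type*} [CommRing R]

theorem Matrix.det_of_antitriangular {m : ℕ} (M : Matrix (Fin m) (Fin m) R)
    (hM : ∀ i j : Fin m, i.1 + j.1 + 1 < m → M i j = 0) :
    M.det = (-1) ^ m.choose 2 * ∏ i, M i i.rev := by
  induction m with
  | zero => simp
  | succ m ih =>
    have hminor := ih (M.submatrix Fin.succ Fin.castSucc) fun i j hij =>
      hM i.succ j.castSucc (by simp only [Fin.val_succ, Fin.val_castSucc]; omega)
    rw [det_succ_row_zero, sum_eq_single (Fin.last m), Fin.succAbove_last, hminor,
      Fin.prod_univ_succ, Fin.rev_zero, Nat.choose_succ_succ', Nat.choose_one_right, pow_add]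
    · simp only [Fin.val_last, submatrix_apply, Fin.rev_succ]
      ring
    · intro j _ hj
      have := Fin.val_lt_last hj
      rw [hM 0 j (by simp only [Fin.val_zero]; omega)]
      ring
    · simp

theorem Matrix.det_fin_add_of_lowerLeft_eq_zero {a b : ℕ}
    (M : Matrix (Fin (a + b)) (Fin (a + b)) R)
    (hM : ∀ i j, M (Fin.natAdd a i) (Fin.castAdd b j) = 0) :
    M.det = (M.submatrix (Fin.castAdd b) (Fin.castAdd b)).det *
      (M.submatrix (Fin.natAdd a) (Fin.natAdd a)).det := by
  have hblock : (M.submatrix finSumFinEquiv finSumFinEquiv).toBlocks₂₁ = 0 := by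
    ext i j
    exact hM i j
  rw [← det_submatrix_equiv_self finSumFinEquiv, ← fromBlocks_toBlocks (M.submatrix _ _), hblock,
    det_fromBlocks_zero₂₁]
  rfl

def recurrenceMatrix (N n : ℕ) (c : ℕ → R) : Matrix (Fin N) (Fin N) R :=
  of fun i k => if i.1 < n then (if i = k then 1 else 0)
    else if k.1 ≤ i.1 ∧ i.1 ≤ k.1 + n then c (k.1 + n - i.1) else 0

section recurrenceMatrix

variable {N n : ℕ} (c : ℕ → R)

theorem recurrenceMatrix_isLowerTriangular : (recurrenceMatrix N n c).IsLowerTriangular := by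
  intro i k (hik : i < k)
  have : i ≠ k := hik.ne
  simp only [recurrenceMatrix, of_apply]
  split_ifs <;> first | rfl | omega

theorem det_recurrenceMatrix (hc : c n = 1) : (recurrenceMatrix N n c).det = 1 := by
  rw [det_of_isLowerTriangular _ (recurrenceMatrix_isLowerTriangular c)]
  refine prod_eq_one fun i _ => ?_
  simp only [recurrenceMatrix, of_apply, le_refl, true_and, Nat.add_sub_cancel_left]
  split_ifs <;> simp_all

theorem recurrenceMatrix_mul_apply_of_lt (A : Matrix (Fin N) (Fin N) R) {i : Fin N}
    (hi : i.1 < n) (j : Fin N) : (recurrenceMatrix N n c * A) i j = A i j := by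
  simp [recurrenceMatrix, mul_apply, hi]

theorem recurrenceMatrix_mul_apply_of_le (A : Matrix (Fin N) (Fin N) R) {i : Fin N}
    (hi : n ≤ i.1) (j : Fin N) :
    (recurrenceMatrix N n c * A) i j = ∑ t : Fin (n + 1), c t * A ⟨i - n + t, by omega⟩ j := by
  symm
  refine Fintype.sum_of_injective (fun t : Fin (n + 1) => (⟨i - n + t, by omega⟩ : Fin N))
    ?_ _ _ ?_ ?_
  · intro t t' h
    simp only [Fin.mk.injEq] at h
    omega
  · intro k hk
    have hwindow : ¬(k.1 ≤ i.1 ∧ i.1 ≤ k.1 + n) := fun h =>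
      hk ⟨⟨k - (i - n), by omega⟩, Fin.ext (by dsimp only; omega)⟩
    simp only [recurrenceMatrix, of_apply, if_neg hi.not_gt, if_neg hwindow, zero_mul]
  · intro t
    simp only [recurrenceMatrix, of_apply]
    rw [if_neg (by omega), if_pos (by omega)]
    congr 2
    omega

end recurrenceMatrix

theorem recurrenceMatrix_mul_apply_eq_sub {N n : ℕ} {s c : ℕ → R} (hc : c n = 1)
    (hrec : ∀ q, ∑ t ∈ range (n + 1), c t * s (q + t) = 0) (A : Matrix (Fin N) (Fin N) R)
    {i j : Fin N} (hi : n ≤ i.1) (hA : ∀ k : Fin N, k < i → A k j = s (k.1 + j.1)) :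
    (recurrenceMatrix N n c * A) i j = A i j - s (i.1 + j.1) := by
  have htail : ∑ t : Fin n, c t * s (i - n + j + t) = -s (i.1 + j.1) := by
    have h := hrec (i - n + j)
    rw [sum_range_succ, hc, one_mul, ← Fin.sum_univ_eq_sum_range,
      show i - n + j + n = i.1 + j.1 by omega] at h
    exact eq_neg_of_add_eq_zero_left h
  have hhead : ∑ t : Fin n, c t * A ⟨i - n + t, by omega⟩ j =
      ∑ t : Fin n, c t * s (i - n + j + t) :=
    sum_congr rfl fun t _ => by
      rw [hA _ (Fin.mk_lt_of_lt_val (by omega))]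
      ring_nf
  have hlast : A ⟨i - n + n, by omega⟩ j = A i j := by
    congr
    omega
  rw [recurrenceMatrix_mul_apply_of_le c A hi, Fin.sum_univ_castSucc]
  simp only [Fin.val_castSucc, Fin.val_last, hc, one_mul]
  rw [hhead, htail, hlast]
  ring

theorem det_hankel_bordered_of_recurrence {n p : ℕ} {s c : ℕ → R} (hc : c n = 1)
    (hrec : ∀ q, ∑ t ∈ range (n + 1), c t * s (q + t) = 0)
    (A : Matrix (Fin (n + (p + 1))) (Fin (n + (p + 1))) R)
    (hA : ∀ i j : Fin (n + (p + 1)), i.1 + j.1 < 2 * n + p → A i j = s (i.1 + j.1)) :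
    A.det = (-1) ^ (p * (p + 1) / 2) * (of fun i j : Fin n => s (i.1 + j.1)).det *
      ∏ j : Fin (p + 1), (A ⟨n + j.1, by omega⟩ ⟨n + p - j.1, by omega⟩ - s (2 * n + p)) := by
  set B := recurrenceMatrix (n + (p + 1)) n c * A
  have hB_top : ∀ i j : Fin (n + (p + 1)), i.1 < n → B i j = A i j := fun _ j hi =>
    recurrenceMatrix_mul_apply_of_lt c A hi j
  have hB : ∀ i j : Fin (n + (p + 1)), n ≤ i.1 → i.1 + j.1 ≤ 2 * n + p →
      B i j = A i j - s (i.1 + j.1) := fun i j hi hij =>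
    recurrenceMatrix_mul_apply_eq_sub hc hrec A hi fun k hk => hA k j (by omega)
  have hB_zero : ∀ i j : Fin (n + (p + 1)), n ≤ i.1 → i.1 + j.1 < 2 * n + p → B i j = 0 :=
    fun i j hi hij => by rw [hB i j hi hij.le, hA i j hij, sub_self]
  have htop : B.submatrix (Fin.castAdd (p + 1)) (Fin.castAdd (p + 1)) =
      of fun i j : Fin n => s (i.1 + j.1) := by
    ext i j
    rw [submatrix_apply, hB_top _ _ (by simp), hA _ _ (by simp; omega)]
    simp
  have hanti : ∀ r : Fin (p + 1), B.submatrix (Fin.natAdd n) (Fin.natAdd n) r r.rev =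
      A ⟨n + r.1, by omega⟩ ⟨n + p - r.1, by omega⟩ - s (2 * n + p) := by
    intro r
    rw [submatrix_apply, hB _ _ (by simp) (by simp; omega)]
    congr 2 <;> (try apply Fin.ext) <;> simp <;> omega
  have hdet : A.det = B.det := by rw [det_mul, det_recurrenceMatrix c hc, one_mul]
  rw [hdet, det_fin_add_of_lowerLeft_eq_zero B fun i j => hB_zero _ _ (by simp) (by simp; omega),
    det_of_antitriangular (B.submatrix (Fin.natAdd n) (Fin.natAdd n))
      fun i j hij => hB_zero _ _ (by simp) (by simp; omega),
    htop, prod_congr rfl fun r _ => hanti r, Nat.choose_two_right, Nat.add_sub_cancel,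
    mul_comm (p + 1)]
  ring

theorem sum_coeff_mul_moment_eq_zero {ι : Type*} [Fintype ι] (x m : ι → R) {P : R[X]}
    (hP : ∀ j, P.IsRoot (x j)) (q : ℕ) :
    ∑ t ∈ range (P.natDegree + 1), P.coeff t * ∑ j, m j * x j ^ (q + t) = 0 := by
  simp_rw [mul_sum]
  rw [sum_comm]
  refine sum_eq_zero fun j _ => ?_
  calc ∑ t ∈ range (P.natDegree + 1), P.coeff t * (m j * x j ^ (q + t))
      = m j * x j ^ q * P.eval (x j) := by
        rw [eval_eq_sum_range, mul_sum]
        exact sum_congr rfl fun t _ => by ring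
    _ = 0 := by rw [(hP j).eq_zero, mul_zero]

/-- Lemma on the determinant `M_{n+p}`: let `s` be the moment sequence of a discrete measure
with `n ≥ 1` mass points, `p ≥ 1`, and let `A` be an `(n+p+1) × (n+p+1)` real matrix with
`A i j = s (i+j)` whenever `i + j ≤ 2n + p - 1` (the remaining entries being arbitrary).
Writing `x_j = A (n+j) (n+p-j)` for `j = 0, …, p`, we have
`det A = (-1)^(p(p+1)/2) · D_{n-1} · ∏_{j=0}^{p} (x_j - s_{2n+p})`. -/
theorem det_hankel_bordered (n : ℕ)
    (x' m : Fin n → ℝ)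
    (s : ℕ → ℝ) (hs : ∀ k : ℕ, s k = ∑ j, m j * x' j ^ k)
    (p : ℕ)
    (A : Matrix (Fin (n + p + 1)) (Fin (n + p + 1)) ℝ)
    (hA : ∀ i j : Fin (n + p + 1), i.1 + j.1 ≤ 2 * n + p - 1 → A i j = s (i.1 + j.1)) :
    A.det = (-1) ^ (p * (p + 1) / 2) * (Matrix.of fun i j : Fin n => s (i.1 + j.1)).det *
      ∏ j : Fin (p + 1),
        (A ⟨n + j.1, by have := j.isLt; omega⟩ ⟨n + p - j.1, by have := j.isLt; omega⟩
          - s (2 * n + p)) := by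
  set P : ℝ[X] := ∏ j, (X - C (x' j))
  have hdeg : P.natDegree = n := by simp [P]
  have hroot : ∀ j, P.IsRoot (x' j) := fun j => by
    simp only [IsRoot, P, eval_prod, eval_sub, eval_X, eval_C]
    exact prod_eq_zero (mem_univ j) (sub_self _)
  have hrec : ∀ q, ∑ t ∈ range (n + 1), P.coeff t * s (q + t) = 0 := fun q => by
    simp_rw [hs, ← hdeg]
    exact sum_coeff_mul_moment_eq_zero x' m hroot q
  have hc : P.coeff n = 1 := hdeg ▸ (monic_prod_X_sub_C x' univ).coeff_natDegree
  exact det_hankel_bordered_of_recurrence hc hrec A fun i j hij => hA i j (by omega)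
end

section
/- Let a ∈ ℝ, let n ≥ 2, and let (s_k)_{k≥0} be a real sequence with s_k = a^k for all k ≤ n. Then the n-th Hankel determinant satisfies D_n = (−1)^{n(n+1)/2} (a^{n+1} − s_{n+1})^n. -/
/-!
Subtracting `a` times each row of the Hankel matrix from the next is a unimodular row operation;
since `s (k + 1) = a * s k` for `k < n`, it clears the first column below `s 0 = 1`. What remains
is the Hankel matrix of the differences `d k = s (k + 2) - a * s (k + 1)`, which vanish for
`k + 2 ≤ n` and equal `-(a ^ (n + 1) - s (n + 1))` at `k = n - 1`. That matrix is zero above its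
antidiagonal, so its determinant is the product of the antidiagonal times the sign
`(-1) ^ (n * (n - 1) / 2)` of the reversal of `Fin n`.
-/

open Matrix

namespace Matrix

variable {R : Type*} [CommRing R] {m : ℕ}

theorem det_of_eq_zero_above_antidiagonal (A : Matrix (Fin m) (Fin m) R)
    (hA : ∀ i j : Fin m, (i : ℕ) + j + 1 < m → A i j = 0) :
    A.det = (-1) ^ (m * (m - 1) / 2) * ∏ i, A i i.rev := by
  induction m with
  | zero => simp
  | succ m ih =>
    have hrow : ∀ j : Fin (m + 1), j ≠ Fin.last m → A 0 j = 0 := fun j hj =>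
      hA 0 j (by have := Fin.val_ne_of_ne hj; simp only [Fin.val_zero, Fin.val_last] at *; omega)
    have hminor := ih (A.submatrix Fin.succ Fin.castSucc) fun i j hij =>
      hA i.succ j.castSucc (by simp only [Fin.val_succ, Fin.val_castSucc]; omega)
    rw [det_succ_row_zero, Finset.sum_eq_single (Fin.last m)
      (fun j _ hj => by rw [hrow j hj, mul_zero, zero_mul]) (by simp),
      Fin.succAbove_last, hminor, Fin.prod_univ_succ, Fin.rev_zero, Nat.triangle_succ, pow_add]
    simp only [submatrix_apply, Fin.rev_succ, Fin.val_last]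
    ring

theorem det_succ_of_column_zero_eq_zero (A : Matrix (Fin (m + 1)) (Fin (m + 1)) R)
    (hA : ∀ i : Fin m, A i.succ 0 = 0) :
    A.det = A 0 0 * (A.submatrix Fin.succ Fin.succ).det := by
  rw [det_succ_column_zero, Fin.sum_univ_succ]
  simp [hA]

def shiftDown (R : Type*) [Zero R] [One R] (m : ℕ) : Matrix (Fin m) (Fin m) R :=
  of fun i j => if (j : ℕ) + 1 = i then 1 else 0

theorem det_one_sub_smul_shiftDown (a : R) : (1 - a • shiftDown R m).det = 1 := by
  rw [det_of_isLowerTriangular]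
  · simp [shiftDown]
  · intro i j hij
    have hij : (i : ℕ) < j := hij
    simp [shiftDown, Fin.ne_of_lt hij, show ¬ (j : ℕ) + 1 = i by omega]

theorem one_sub_smul_shiftDown_mul_apply_zero {n : Type*} (a : R) (B : Matrix (Fin (m + 1)) n R)
    (j : n) : ((1 - a • shiftDown R (m + 1)) * B : Matrix (Fin (m + 1)) n R) 0 j = B 0 j := by
  simp [mul_apply, shiftDown, one_apply]

theorem one_sub_smul_shiftDown_mul_apply_succ {n : Type*} (a : R) (B : Matrix (Fin (m + 1)) n R)
    (i : Fin m) (j : n) :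
    ((1 - a • shiftDown R (m + 1)) * B : Matrix (Fin (m + 1)) n R) i.succ j =
      B i.succ j - a * B i.castSucc j := by
  have hprev : ∀ k : Fin (m + 1), (k : ℕ) + 1 = i.succ ↔ k = i.castSucc := fun k => by
    simp [Fin.ext_iff]
  rw [Matrix.sub_mul, Matrix.one_mul, Matrix.smul_mul, sub_apply, smul_apply, smul_eq_mul, mul_apply]
  simp only [shiftDown, of_apply, hprev, ite_mul, one_mul, zero_mul, Finset.sum_ite_eq',
    Finset.mem_univ, if_true]

theorem det_hankel_eq_mul_det_hankel_sub (s : ℕ → R) (a : R) (hs : ∀ k < m, s (k + 1) = a * s k) :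
    (of fun i j : Fin (m + 1) => s (i + j)).det =
      s 0 * (of fun i j : Fin m => s (i + j + 2) - a * s (i + j + 1)).det := by
  set M := (1 - a • shiftDown R (m + 1)) * of fun i j : Fin (m + 1) => s (i + j)
  have hM : ∀ (i : Fin m) (j : Fin (m + 1)), M i.succ j = s (i + j + 1) - a * s (i + j) := by
    intro i j
    simp only [M, one_sub_smul_shiftDown_mul_apply_succ, of_apply, Fin.val_succ, Fin.val_castSucc,
      Nat.add_right_comm]
  have hM0 : M 0 0 = s 0 := by
    simp only [M, one_sub_smul_shiftDown_mul_apply_zero, of_apply, Fin.val_zero]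
  calc _ = M.det := by rw [det_mul, det_one_sub_smul_shiftDown, one_mul]
    _ = M 0 0 * (M.submatrix Fin.succ Fin.succ).det :=
        det_succ_of_column_zero_eq_zero M fun i => by
          rw [hM, Fin.val_zero, add_zero, hs i i.isLt, sub_self]
    _ = _ := by
        rw [hM0]
        congr 2
        ext i j
        rw [submatrix_apply, hM, of_apply, Fin.val_succ, ← add_assoc]

end Matrix

theorem hankel_det_geometric_start_general (a : ℝ) (n : ℕ)
    (s : ℕ → ℝ) (hs : ∀ k ≤ n, s k = a ^ k) :
    (Matrix.of fun i j : Fin (n + 1) => s (i.1 + j.1)).det =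
      (-1) ^ (n * (n + 1) / 2) * (a ^ (n + 1) - s (n + 1)) ^ n := by
  have hgeom : ∀ k < n, s (k + 1) = a * s k := fun k hk => by
    rw [hs _ hk, hs k hk.le, pow_succ']
  rw [det_hankel_eq_mul_det_hankel_sub s a hgeom, hs 0 n.zero_le, pow_zero, one_mul,
    det_of_eq_zero_above_antidiagonal]
  · have hanti : ∀ i : Fin n, s (i + i.rev + 2) - a * s (i + i.rev + 1) =
        -1 * (a ^ (n + 1) - s (n + 1)) := fun i => by
      have hi : (i : ℕ) + i.rev + 1 = n := by rw [Fin.val_rev]; omega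
      rw [show (i : ℕ) + i.rev + 2 = n + 1 by omega, hi, hs n le_rfl, pow_succ']
      ring
    simp only [of_apply, hanti, Finset.prod_const, Finset.card_univ, Fintype.card_fin, mul_pow,
      ← mul_assoc, ← pow_add]
    rw [← Nat.triangle_succ, Nat.add_sub_cancel, Nat.mul_comm]
  · intro i j hij
    simp only [of_apply]
    rw [hs _ (by omega), hs _ (by omega), pow_succ']
    ring

/-- If `s k = a^k` for `k ≤ n` (with `n ≥ 2`), then the `n`-th Hankel determinant equals
`(-1)^(n(n+1)/2) (a^(n+1) - s_{n+1})^n`. -/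
theorem hankel_det_geometric_start (a : ℝ) (n : ℕ) (hn : 2 ≤ n)
    (s : ℕ → ℝ) (hs : ∀ k ≤ n, s k = a ^ k) :
    (Matrix.of fun i j : Fin (n + 1) => s (i.1 + j.1)).det =
      (-1) ^ (n * (n + 1) / 2) * (a ^ (n + 1) - s (n + 1)) ^ n :=
  hankel_det_geometric_start_general a n s hs
end

section
/- Let (s_n)_{n≥0} be a real sequence with s_0 = 1 whose Hankel determinants satisfy D_n = 0 for all n ≥ 1. Then s_n = s_1^n for every n ≥ 0. -/
open Matrix Finset

private lemma hankel_aux (s : ℕ → ℝ) (t : ℝ) (m : ℕ) (hm : 1 ≤ m)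
    (hk : ∀ k, k ≤ m → s k = t ^ k)
    (hdet : (Matrix.of fun i j : Fin (m + 1) => s (i.1 + j.1)).det = 0) :
    s (m + 1) = t ^ (m + 1) := by
  set A : Matrix (Fin (m + 1)) (Fin (m + 1)) ℝ :=
    Matrix.of (fun i j : Fin (m + 1) => s (i.1 + j.1)) with hA
  set E : Matrix (Fin (m + 1)) (Fin (m + 1)) ℝ :=
    Matrix.of (fun i l : Fin (m + 1) =>
      (if i = l then (1 : ℝ) else 0) + (if (i : ℕ) = (l : ℕ) + 1 then -t else 0)) with hE
  have hEdet : E.det = 1 := by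
    rw [Matrix.det_of_lowerTriangular E (by
      intro i j hij
      have hij' : (i : Fin (m+1)) < j := hij
      simp only [hE, Matrix.of_apply]
      have hij2 : i.1 < j.1 := hij'
      rw [if_neg (by exact fun h => absurd h (ne_of_lt hij')), if_neg (by omega), add_zero])]
    have : ∀ i : Fin (m + 1), E i i = 1 := by
      intro i
      simp only [hE, Matrix.of_apply]
      rw [if_neg (fun h : (i:ℕ) = (i:ℕ) + 1 => by omega), add_zero]
      simp
    rw [Finset.prod_congr rfl (fun i _ => this i), Finset.prod_const_one]
  have hpow : ∀ k : ℕ, 1 ≤ k → t ^ k = t * t ^ (k - 1) := by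
    intro k hk1
    conv_lhs => rw [show k = (k - 1) + 1 from by omega]
    rw [pow_succ]; ring
  have hrow : ∀ r j : Fin (m + 1), (E * A) r j =
      if r.1 = 0 then s j.1 else s (r.1 + j.1) - t * s (r.1 - 1 + j.1) := by
    intro r j
    rw [Matrix.mul_apply]
    simp only [hE, hA, Matrix.of_apply, add_mul, ite_mul, one_mul, zero_mul, neg_mul,
      Finset.sum_add_distrib, Finset.sum_ite_eq, Finset.mem_univ, if_true]
    rcases Nat.eq_zero_or_pos r.1 with h0 | h0
    · rw [if_pos h0, Finset.sum_eq_zero fun l _ => by rw [if_neg (by omega)], add_zero, h0,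
        zero_add]
    · rw [if_neg (by omega), Finset.sum_eq_single (⟨r.1 - 1, by omega⟩ : Fin (m + 1))]
      · rw [if_pos (by simp; omega)]
        ring_nf
      · intro l _ hl
        rw [if_neg fun h => hl (by ext; simp at h ⊢; omega)]
      · intro h; exact absurd (Finset.mem_univ _) h
  have hEA : (E * A).det = 0 := by rw [Matrix.det_mul, hdet, mul_zero]
  set N : Matrix (Fin (m + 1)) (Fin (m + 1)) ℝ := (E * A).submatrix Fin.revPerm id with hNdef
  have hN : N.det = 0 := by rw [hNdef, Matrix.det_permute, hEA, mul_zero]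
  have hexp := Matrix.det_succ_column_zero N
  rw [hN] at hexp
  have hrev : ∀ i : Fin (m + 1), ((Fin.revPerm i : Fin (m + 1)) : ℕ) = m - i.1 := by
    intro i; simp [Fin.revPerm, Fin.rev]
  have hN0 : ∀ i : Fin (m + 1), i ≠ Fin.last m → N i 0 = 0 := by
    intro i hi
    have hi' : i.1 < m := by
      have := i.2
      rcases Nat.lt_or_ge i.1 m with h | h
      · exact h
      · exact absurd (Fin.ext (by omega : i.1 = m)) hi
    have h1 : (1 : ℕ) ≤ m - i.1 := by omega
    rw [hNdef, Matrix.submatrix_apply, id, hrow]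
    rw [if_neg (by rw [hrev]; omega)]
    rw [hrev]
    simp only [Fin.val_zero, add_zero]
    rw [hk (m - i.1) (by omega), hk (m - i.1 - 1) (by omega)]
    rw [hpow (m - i.1) (by omega)]; ring
  have hNlast : N (Fin.last m) 0 = 1 := by
    rw [hNdef, Matrix.submatrix_apply, id, hrow, if_pos (by rw [hrev]; simp)]
    simpa using hk 0 (by omega)
  rw [Finset.sum_eq_single (Fin.last m)
      (fun b _ hb => by rw [hN0 b hb, mul_zero, zero_mul])
      (fun h => absurd (Finset.mem_univ _) h)] at hexp
  rw [hNlast, mul_one] at hexp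
  set a : ℝ := s (m + 1) - t ^ (m + 1) with ha
  have hM' : (N.submatrix (Fin.last m).succAbove Fin.succ).det = a ^ m := by
    have hentry : ∀ i j : Fin m, (N.submatrix (Fin.last m).succAbove Fin.succ) i j =
        s (m - i.1 + (j.1 + 1)) - t * s (m - i.1 - 1 + (j.1 + 1)) := by
      intro i j
      rw [Matrix.submatrix_apply, Fin.succAbove_last_apply, hNdef, Matrix.submatrix_apply, id,
        hrow, if_neg (by rw [hrev]; simp; omega)]
      rw [hrev]
      simp
    rw [Matrix.det_of_upperTriangular (by
      intro i j hij
      have hij' : (j : Fin m) < i := hij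
      rw [hentry]
      have h1 : m - i.1 + (j.1 + 1) ≤ m := by omega
      rw [hk _ h1, hk _ (by omega)]
      rw [hpow (m - i.1 + (j.1 + 1)) (by omega),
        show m - i.1 + (j.1 + 1) - 1 = m - i.1 - 1 + (j.1 + 1) from by omega]; ring)]
    have hdiag : ∀ i : Fin m, (N.submatrix (Fin.last m).succAbove Fin.succ) i i = a := by
      intro i
      rw [hentry]
      have h1 : m - i.1 + (i.1 + 1) = m + 1 := by omega
      have h2 : m - i.1 - 1 + (i.1 + 1) = m := by omega
      rw [h1, h2, hk m le_rfl, ha, pow_succ]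
      ring
    rw [Finset.prod_congr rfl (fun i _ => hdiag i), Finset.prod_const, Finset.card_univ,
      Fintype.card_fin]
  rw [hM'] at hexp
  have hne : ((-1 : ℝ) ^ ((Fin.last m : Fin (m + 1)) : ℕ)) ≠ 0 := by
    apply pow_ne_zero; norm_num
  have : a ^ m = 0 := by
    rcases mul_eq_zero.mp hexp.symm with h | h
    · exact absurd h hne
    · exact h
  have ha0 : a = 0 := by
    have := pow_eq_zero_iff (by omega : m ≠ 0) |>.mp this
    exact this
  rw [ha] at ha0
  linarith

/-- If `s₀ = 1` and all Hankel determinants `D n` with `n ≥ 1` vanish, then `s n = s₁ⁿ`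
for every `n`. -/
theorem geometric_of_hankel_dets_zero (s : ℕ → ℝ) (hs0 : s 0 = 1)
    (hD : ∀ n ≥ 1, (Matrix.of fun i j : Fin (n + 1) => s (i.1 + j.1)).det = 0) :
    ∀ n : ℕ, s n = s 1 ^ n := by
  intro n
  induction n using Nat.strong_induction_on with
  | _ n ih =>
    match n, ih with
    | 0, _ => simpa using hs0
    | 1, _ => simp
    | (m + 2), ih =>
      exact hankel_aux s (s 1) (m + 1) (by omega) (fun k hk => ih k (by omega))
        (hD (m + 1) (by omega))
end

section
/- Let (s_n)_{n≥0} be a real sequence such that the Hankel matrix H_n = (s_{i+j})_{0≤i,j≤n} is positive semi-definite for every n ≥ 0. Then exactly one of the following holds: either D_n > 0 for all n ≥ 0, or there exists an integer n₀ ≥ 0 such that D_n > 0 for all n < n₀ and D_n = 0 for all n ≥ n₀. -/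
/-!
A positive semi-definite matrix with a singular principal submatrix is itself singular: a
kernel vector of the submatrix, extended by zero, is isotropic for the whole matrix, and an
isotropic vector of a positive semi-definite form lies in its kernel. Since `H n` is the
leading principal submatrix of `H (n + 1)`, the vanishing of the nonnegative determinants
`D n` propagates upwards, so the set where they vanish is either empty or a ray.
-/

open Function

open scoped ComplexOrder

theorem Monotone.xor_forall_not_exists_threshold {P : ℕ → Prop} (hP : Monotone P) :
    Xor (∀ n, ¬P n) (∃ n₀, (∀ n < n₀, ¬P n) ∧ ∀ n ≥ n₀, P n) := by
  classical
  by_cases h : ∃ n, P n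
  · refine Or.inr ⟨⟨Nat.find h, fun _ => Nat.find_min h, fun n hn => hP hn (Nat.find_spec h)⟩,
      fun hnone => hnone _ (Nat.find_spec h)⟩
  · push Not at h
    exact Or.inl ⟨h, fun ⟨n₀, _, hge⟩ => h n₀ (hge n₀ le_rfl)⟩

namespace Matrix

variable {m n α : Type*} [Fintype m] [Fintype n]

theorem dotProduct_extend_zero_right [NonUnitalNonAssocSemiring α] {e : m → n}
    (he : Injective e) (w : n → α) (v : m → α) :
    w ⬝ᵥ extend e v 0 = (w ∘ e) ⬝ᵥ v :=
  (Fintype.sum_of_injective e he _ _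
    (fun i hi => by simp [extend_apply' _ _ _ hi]) (fun i => by simp [he.extend_apply])).symm

theorem mulVec_extend_zero_comp [NonUnitalNonAssocSemiring α] {e : m → n} (he : Injective e)
    (M : Matrix n n α) (v : m → α) :
    (M *ᵥ extend e v 0) ∘ e = M.submatrix e e *ᵥ v :=
  funext fun _ => dotProduct_extend_zero_right he _ v

theorem star_extend_zero_dotProduct_mulVec [CommSemiring α] [StarRing α] {e : m → n}
    (he : Injective e) (M : Matrix n n α) (v : m → α) :
    star (extend e v 0) ⬝ᵥ M *ᵥ extend e v 0 = star v ⬝ᵥ M.submatrix e e *ᵥ v := by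
  have hstar : star (extend e v 0) = extend e (star v) 0 := by
    funext i
    by_cases hi : ∃ k, e k = i
    · obtain ⟨_, rfl⟩ := hi
      simp [he.extend_apply]
    · simp [extend_apply' _ _ _ hi]
  rw [hstar, dotProduct_comm, dotProduct_extend_zero_right he, mulVec_extend_zero_comp he,
    dotProduct_comm]

theorem PosSemidef.det_eq_zero_of_det_submatrix_eq_zero {𝕜 : Type*} [RCLike 𝕜] [DecidableEq m]
    [DecidableEq n] {M : Matrix n n 𝕜} (hM : M.PosSemidef) {e : m → n} (he : Injective e)
    (h : (M.submatrix e e).det = 0) : M.det = 0 := by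
  obtain ⟨v, hv, hMv⟩ := exists_mulVec_eq_zero_iff.mpr h
  have hx : extend e v 0 ≠ 0 := fun h0 =>
    hv (funext fun k => by simpa [he.extend_apply] using congrFun h0 (e k))
  have hquad : star (extend e v 0) ⬝ᵥ M *ᵥ extend e v 0 = 0 := by
    rw [star_extend_zero_dotProduct_mulVec he, hMv, dotProduct_zero]
  exact exists_mulVec_eq_zero_iff.mp ⟨_, hx, (hM.dotProduct_mulVec_zero_iff _).mp hquad⟩

end Matrix

/-- If every Hankel matrix of a real sequence is positive semi-definite, then exactly one
of the following holds: either all Hankel determinants are positive, or there is an `n₀`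
such that `D n > 0` for `n < n₀` and `D n = 0` for `n ≥ n₀`. -/
theorem hankel_det_dichotomy (s : ℕ → ℝ)
    (hpsd : ∀ n : ℕ, (Matrix.of fun i j : Fin (n + 1) => s (i.1 + j.1)).PosSemidef) :
    Xor' (∀ n : ℕ, 0 < (Matrix.of fun i j : Fin (n + 1) => s (i.1 + j.1)).det)
      (∃ n₀ : ℕ, (∀ n < n₀, 0 < (Matrix.of fun i j : Fin (n + 1) => s (i.1 + j.1)).det) ∧
        ∀ n ≥ n₀, (Matrix.of fun i j : Fin (n + 1) => s (i.1 + j.1)).det = 0) := by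
  have hpos : ∀ n, 0 < (Matrix.of fun i j : Fin (n + 1) => s (i.1 + j.1)).det ↔
      ¬(Matrix.of fun i j : Fin (n + 1) => s (i.1 + j.1)).det = 0 :=
    fun n => (hpsd n).det_nonneg.lt_iff_ne'
  have hvanish : Monotone fun n => (Matrix.of fun i j : Fin (n + 1) => s (i.1 + j.1)).det = 0 :=
    monotone_nat_of_le_succ fun n h =>
      (hpsd (n + 1)).det_eq_zero_of_det_submatrix_eq_zero (Fin.castSucc_injective _) h
  simp only [hpos]
  exact hvanish.xor_forall_not_exists_threshold
end
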